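/- arXiv:2604.06333 — 8 statements merged into one kernel-verified Lean document; each statement's English description precedes it below -/
import Mathlib

section
/- Let σ > 0 and let k(x, y) = exp(−‖x − y‖²/(2σ²)) be the Gaussian kernel on ℝⁿ. Let y⁺₁, …, y⁺_M ∈ ℝⁿ and y⁻₁, …, y⁻_N ∈ ℝⁿ be finite families of points, with kernel density estimates p_KDE(x) = (1/M) Σₘ k(x, y⁺ₘ) and q_KDE(x) = (1/N) Σⱼ k(x, y⁻ⱼ). Define the normalized drift field V(x) = (Σₘ k(x, y⁺ₘ)(y⁺ₘ − x))/(Σₘ k(x, y⁺ₘ)) − (Σⱼ k(x, y⁻ⱼ)(y⁻ⱼ − x))/(Σⱼ k(x, y⁻ⱼ)). Then for all x ∈ ℝⁿ, V(x) = −σ² ∇ₓ log( q_KDE(x) / p_KDE(x) ); in particular V is conservative. -/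
/-!
Since `∇ₓ exp (-‖x - y‖² / (2σ²)) = σ⁻² k(x, y) (y - x)`, the gradient of `log (c · Σᵢ k(x, yᵢ))`
is `σ⁻²` times the kernel-weighted mean of the `yᵢ - x` (the mean-shift vector), whatever the
constant `c ≠ 0`. The drift field is the difference of the two mean-shift vectors, hence
`σ²` times the gradient of `log p_KDE - log q_KDE = -log (q_KDE / p_KDE)`.
-/

noncomputable section

open InnerProductSpace Real

section GradientCalculus

variable {E : Type*} [NormedAddCommGroup E] [InnerProductSpace ℝ E] [CompleteSpace E]
  {f g : E → ℝ} {u v x : E}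

theorem HasDerivAt.comp_hasGradientAt (x : E) {φ : ℝ → ℝ} {φ' : ℝ}
    (hφ : HasDerivAt φ φ' (f x)) (hf : HasGradientAt f v x) :
    HasGradientAt (fun z => φ (f z)) (φ' • v) x := by
  rw [hasGradientAt_iff_hasFDerivAt, map_smul]
  exact hφ.comp_hasFDerivAt x (hasGradientAt_iff_hasFDerivAt.mp hf)

theorem HasGradientAt.sub (hf : HasGradientAt f u x) (hg : HasGradientAt g v x) :
    HasGradientAt (fun z => f z - g z) (u - v) x := by
  rw [hasGradientAt_iff_hasFDerivAt, map_sub]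
  exact hf.hasFDerivAt.sub hg.hasFDerivAt

theorem HasGradientAt.fun_sum {ι : Type*} {s : Finset ι} {F : ι → E → ℝ} {G : ι → E}
    (h : ∀ i ∈ s, HasGradientAt (F i) (G i) x) :
    HasGradientAt (fun z => ∑ i ∈ s, F i z) (∑ i ∈ s, G i) x := by
  rw [hasGradientAt_iff_hasFDerivAt, map_sum]
  exact HasFDerivAt.fun_sum fun i hi => (h i hi).hasFDerivAt

theorem hasGradientAt_norm_sub_sq (y x : E) :
    HasGradientAt (fun z => ‖z - y‖ ^ 2) ((2 : ℝ) • (x - y)) x := by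
  rw [hasGradientAt_iff_hasFDerivAt]
  refine ((hasFDerivAt_id x).sub_const y).norm_sq.congr_fderiv ?_
  ext w
  simp

end GradientCalculus

section GaussianKernel

variable {E : Type*} [NormedAddCommGroup E]

def gaussKernel (σ : ℝ) (x y : E) : ℝ := exp (-‖x - y‖ ^ 2 / (2 * σ ^ 2))

theorem gaussKernel_pos (σ : ℝ) (x y : E) : 0 < gaussKernel σ x y := exp_pos _

theorem sum_gaussKernel_pos {ι : Type*} [Fintype ι] [Nonempty ι] (σ : ℝ) (y : ι → E)
    (x : E) :
    0 < ∑ i, gaussKernel σ x (y i) :=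
  Finset.sum_pos (fun i _ => gaussKernel_pos σ x (y i)) Finset.univ_nonempty

variable [InnerProductSpace ℝ E]

def meanShift {ι : Type*} [Fintype ι] (σ : ℝ) (y : ι → E) (x : E) : E :=
  (∑ i, gaussKernel σ x (y i))⁻¹ • ∑ i, gaussKernel σ x (y i) • (y i - x)

variable [CompleteSpace E]

theorem hasGradientAt_gaussKernel (σ : ℝ) (y x : E) :
    HasGradientAt (fun z => gaussKernel σ z y)
      (((σ ^ 2)⁻¹ * gaussKernel σ x y) • (y - x)) x := by
  have hφ := ((hasDerivAt_id (‖x - y‖ ^ 2)).div_const (2 * σ ^ 2)).neg.exp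
  convert hφ.comp_hasGradientAt x (hasGradientAt_norm_sub_sq y x) using 1
  · funext z
    simp [gaussKernel, neg_div]
  · rw [smul_smul, ← neg_sub x y, smul_neg, ← neg_smul, gaussKernel]
    congr 1
    simp only [Pi.neg_apply, id, neg_div]
    ring

theorem hasGradientAt_log_mul_sum_gaussKernel {ι : Type*} [Fintype ι] [Nonempty ι] {c : ℝ}
    (hc : c ≠ 0) (σ : ℝ) (y : ι → E) (x : E) :
    HasGradientAt (fun z => log (c * ∑ i, gaussKernel σ z (y i)))
      ((σ ^ 2)⁻¹ • meanShift σ y x) x := by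
  have hS := (sum_gaussKernel_pos σ y x).ne'
  have hsum : HasGradientAt (fun z => ∑ i, gaussKernel σ z (y i))
      (∑ i, ((σ ^ 2)⁻¹ * gaussKernel σ x (y i)) • (y i - x)) x :=
    HasGradientAt.fun_sum fun i _ => hasGradientAt_gaussKernel σ (y i) x
  have hlog :=
    ((hasDerivAt_id (∑ i, gaussKernel σ x (y i))).const_mul c).log (mul_ne_zero hc hS)
  convert hlog.comp_hasGradientAt x hsum using 1
  · rfl
  rw [meanShift, smul_smul, Finset.smul_sum, Finset.smul_sum]
  refine Finset.sum_congr rfl fun i _ => ?_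
  rw [smul_smul, smul_smul, id]
  congr 1
  field_simp

theorem hasGradientAt_log_div_mul_sum_gaussKernel {ι κ : Type*} [Fintype ι] [Nonempty ι]
    [Fintype κ] [Nonempty κ] {c d : ℝ} (hc : c ≠ 0) (hd : d ≠ 0) (σ : ℝ) (y : ι → E)
    (y' : κ → E) (x : E) :
    HasGradientAt
      (fun z => log ((d * ∑ j, gaussKernel σ z (y' j)) / (c * ∑ i, gaussKernel σ z (y i))))
      ((σ ^ 2)⁻¹ • (meanShift σ y' x - meanShift σ y x)) x := by
  have hsplit : (fun z => log ((d * ∑ j, gaussKernel σ z (y' j)) /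
      (c * ∑ i, gaussKernel σ z (y i)))) = fun z =>
        log (d * ∑ j, gaussKernel σ z (y' j)) - log (c * ∑ i, gaussKernel σ z (y i)) := by
    funext z
    exact log_div (mul_ne_zero hd (sum_gaussKernel_pos σ y' z).ne')
      (mul_ne_zero hc (sum_gaussKernel_pos σ y z).ne')
  rw [hsplit, smul_sub]
  exact (hasGradientAt_log_mul_sum_gaussKernel hd σ y' x).sub
    (hasGradientAt_log_mul_sum_gaussKernel hc σ y x)

end GaussianKernel

/-- For the Gaussian kernel, the normalized drift field
`V(x) = V⁺(x) − V⁻(x)` satisfies `V(x) = −σ² ∇ₓ log(q_KDE(x)/p_KDE(x))`;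
in particular `V` is conservative. -/
theorem gaussian_drift_field_eq_neg_grad_log_KDE_ratio {n M N : ℕ}
    (hM : 0 < M) (hN : 0 < N) (σ : ℝ) (hσ : 0 < σ)
    (k : EuclideanSpace ℝ (Fin n) → EuclideanSpace ℝ (Fin n) → ℝ)
    (hk : ∀ x y : EuclideanSpace ℝ (Fin n),
      k x y = Real.exp (-‖x - y‖ ^ 2 / (2 * σ ^ 2)))
    (yp : Fin M → EuclideanSpace ℝ (Fin n)) (yn : Fin N → EuclideanSpace ℝ (Fin n))
    (pKDE qKDE : EuclideanSpace ℝ (Fin n) → ℝ)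
    (hp : ∀ x, pKDE x = (1 / (M : ℝ)) * ∑ m, k x (yp m))
    (hq : ∀ x, qKDE x = (1 / (N : ℝ)) * ∑ j, k x (yn j))
    (V : EuclideanSpace ℝ (Fin n) → EuclideanSpace ℝ (Fin n))
    (hV : ∀ x, V x = (∑ m, k x (yp m))⁻¹ • ∑ m, k x (yp m) • (yp m - x)
                   - (∑ j, k x (yn j))⁻¹ • ∑ j, k x (yn j) • (yn j - x)) :
    (∀ x, V x = -(σ ^ 2 • gradient (fun x' => Real.log (qKDE x' / pKDE x')) x)) ∧
    ∃ L : EuclideanSpace ℝ (Fin n) → ℝ, ∀ x, gradient L x = V x := by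
  obtain rfl : k = gaussKernel σ := funext₂ hk
  have : Nonempty (Fin M) := Fin.pos_iff_nonempty.mp hM
  have : Nonempty (Fin N) := Fin.pos_iff_nonempty.mp hN
  have hσ2 : σ ^ 2 ≠ 0 := pow_ne_zero 2 hσ.ne'
  have hcM : 1 / (M : ℝ) ≠ 0 := by simpa using hM.ne'
  have hcN : 1 / (N : ℝ) ≠ 0 := by simpa using hN.ne'
  have hKDE : (fun x' => log (qKDE x' / pKDE x')) = fun z =>
      log ((1 / (N : ℝ) * ∑ j, gaussKernel σ z (yn j)) /
        (1 / (M : ℝ) * ∑ m, gaussKernel σ z (yp m))) := by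
    simp only [hp, hq]
  have hlog_ratio : ∀ x,
      HasGradientAt (fun x' => log (qKDE x' / pKDE x')) (-(σ ^ 2)⁻¹ • V x) x := fun x => by
    rw [hKDE, hV x, neg_smul, ← smul_neg, neg_sub]
    exact hasGradientAt_log_div_mul_sum_gaussKernel hcM hcN σ yp yn x
  refine ⟨fun x => ?_, fun x' => -σ ^ 2 * log (qKDE x' / pKDE x'), fun x => ?_⟩
  · rw [(hlog_ratio x).gradient, smul_smul, mul_neg, mul_inv_cancel₀ hσ2, neg_smul, one_smul,
      neg_neg]
  · have hL := ((hasDerivAt_id _).const_mul (-σ ^ 2)).comp_hasGradientAt x (hlog_ratio x)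
    refine hL.gradient.trans ?_
    rw [smul_smul, mul_one, neg_mul_neg, mul_inv_cancel₀ hσ2, one_smul]
end
end

section
/- Let φ : [0, ∞) → ℝ be a continuous, strictly positive, integrable radial profile, and let c > 0. If φ satisfies (1/2) ∫_r^∞ φ(s) ds = c · φ(r) for all r ≥ 0, then φ(r) = φ(0) · exp(−r/(2c)) for all r ≥ 0. Consequently, among radial kernels k(x, y) = φ(‖x − y‖²), the Gaussian kernel is the unique one (up to scaling) whose sharp kernel k♯(x, y) = (1/2) ∫_{‖x−y‖²}^∞ φ(s) ds is proportional to k itself. -/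
open MeasureTheory

noncomputable section

/-- If a continuous, strictly positive, integrable radial profile
`φ : [0,∞) → ℝ` satisfies `(1/2) ∫_r^∞ φ(s) ds = c·φ(r)` for all `r ≥ 0` (with `c > 0`),
then `φ(r) = φ(0)·exp(−r/(2c))` for all `r ≥ 0`: among radial kernels, the Gaussian is
the unique one (up to scaling) whose sharp kernel is proportional to the kernel itself. -/
theorem sharp_proportional_iff_gaussian (φ : ℝ → ℝ) (c : ℝ) (hc : 0 < c)
    (hcont : ContinuousOn φ (Set.Ici 0))
    (hpos : ∀ r : ℝ, 0 ≤ r → 0 < φ r)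
    (hint : IntegrableOn φ (Set.Ici 0))
    (heq : ∀ r : ℝ, 0 ≤ r → (1 / 2 : ℝ) * ∫ s in Set.Ioi r, φ s = c * φ r) :
    ∀ r : ℝ, 0 ≤ r → φ r = φ 0 * Real.exp (-r / (2 * c)) := by
  set A : ℝ := ∫ s in Set.Ioi (0:ℝ), φ s with hA
  set G : ℝ → ℝ := fun r => ∫ x in (0:ℝ)..r, φ x with hG
  have hsplit : ∀ r : ℝ, 0 ≤ r → (∫ s in Set.Ioi r, φ s) = A - G r := by
    intro r hr
    have h1 : Set.Ioc (0:ℝ) r ∪ Set.Ioi r = Set.Ioi 0 := Set.Ioc_union_Ioi_eq_Ioi hr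
    have hIoc : IntegrableOn φ (Set.Ioc 0 r) :=
      hint.mono_set (Set.Ioc_subset_Icc_self.trans (Set.Icc_subset_Ici_self))
    have hIoi : IntegrableOn φ (Set.Ioi r) :=
      hint.mono_set (fun x hx => le_trans hr (le_of_lt hx))
    have := setIntegral_union (Set.Ioc_disjoint_Ioi le_rfl) measurableSet_Ioi hIoc hIoi
    rw [h1] at this
    have hGr : G r = ∫ s in Set.Ioc 0 r, φ s := intervalIntegral.integral_of_le hr
    rw [hA, this, hGr]; ring
  have hφeq : ∀ r : ℝ, 0 ≤ r → φ r = (A - G r) / (2 * c) := by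
    intro r hr
    have := heq r hr
    rw [hsplit r hr] at this
    field_simp at this ⊢
    linarith
  -- derivative of G within Ici x at x is φ x, for x ≥ 0
  have hGderiv : ∀ x : ℝ, 0 ≤ x → HasDerivWithinAt G (φ x) (Set.Ici x) x := by
    intro x hx
    have hmeas : StronglyMeasurableAtFilter φ (nhdsWithin x (Set.Ioi x)) volume :=
      ⟨Set.Ici 0, Filter.mem_of_superset self_mem_nhdsWithin
        (fun y hy => le_trans hx (le_of_lt hy)), hint.aestronglyMeasurable⟩
    have hib : IntervalIntegrable φ volume 0 x := by
      rw [intervalIntegrable_iff_integrableOn_Ioc_of_le hx]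
      exact hint.mono_set (Set.Ioc_subset_Icc_self.trans (Set.Icc_subset_Ici_self))
    have hcw : ContinuousWithinAt φ (Set.Ioi x) x :=
      (hcont x hx).mono (fun y hy => le_trans hx (le_of_lt hy))
    exact intervalIntegral.integral_hasDerivWithinAt_right hib hmeas hcw
  set ψ : ℝ → ℝ := fun r => (A - G r) * Real.exp (r / (2 * c)) with hψdef
  have hψderiv : ∀ x : ℝ, 0 ≤ x → HasDerivWithinAt ψ 0 (Set.Ici x) x := by
    intro x hx
    have h1 : HasDerivWithinAt (fun r => A - G r) (-φ x) (Set.Ici x) x :=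
      ((hGderiv x hx).const_sub A)
    have h2 : HasDerivWithinAt (fun r : ℝ => Real.exp (r / (2 * c)))
        (Real.exp (x / (2 * c)) * (1 / (2 * c))) (Set.Ici x) x := by
      have := ((hasDerivAt_id x).div_const (2 * c)).exp
      simpa using this.hasDerivWithinAt
    have h3 := h1.mul h2
    have hval : -φ x * Real.exp (x / (2 * c)) +
        (A - G x) * (Real.exp (x / (2 * c)) * (1 / (2 * c))) = 0 := by
      rw [hφeq x hx]; ring
    rw [hval] at h3
    exact h3
  intro r hr
  have hψcont : ContinuousOn ψ (Set.Icc 0 r) := by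
    have hG : ContinuousOn G (Set.Icc 0 r) := by
      have := intervalIntegral.continuousOn_primitive_interval
        (a := (0:ℝ)) (b := r) (f := φ) (μ := volume)
        (by rw [Set.uIcc_of_le hr]; exact hint.mono_set Set.Icc_subset_Ici_self)
      rwa [Set.uIcc_of_le hr] at this
    exact (continuousOn_const.sub hG).mul
      ((Real.continuous_exp.comp (continuous_id.div_const _)).continuousOn)
  have hconst : ψ r = ψ 0 := by
    have := constant_of_has_deriv_right_zero
      (f := ψ) (a := 0) (b := r) hψcont
      (fun x hx => (hψderiv x hx.1).mono (Set.Ici_subset_Ici.mpr le_rfl))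
    exact this r (Set.mem_Icc.mpr ⟨hr, le_rfl⟩)
  have hG0 : G 0 = 0 := intervalIntegral.integral_same
  have e0 : Real.exp ((0:ℝ) / (2 * c)) = 1 := by norm_num
  have hφr := hφeq r hr
  have hφ0 := hφeq 0 le_rfl
  have hψr : ψ r = 2 * c * φ r * Real.exp (r / (2 * c)) := by
    rw [hψdef]; simp only
    rw [hφr]; field_simp
  have hψ0 : ψ 0 = 2 * c * φ 0 := by
    rw [hψdef]; simp only [hG0, e0]
    rw [hφ0, hG0]; field_simp
  rw [hψr, hψ0] at hconst
  have hexp : Real.exp (-r / (2 * c)) = (Real.exp (r / (2 * c)))⁻¹ := by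
    rw [← Real.exp_neg]; ring_nf
  rw [hexp]
  have hepos : Real.exp (r / (2 * c)) ≠ 0 := (Real.exp_pos _).ne'
  field_simp
  nlinarith [hconst]
end
end

section
/- Let n ≥ 2 and let k : ℝⁿ × ℝⁿ → ℝ be a continuously differentiable symmetric kernel with k(x, y) ≠ 0 for x ≠ y. Suppose that for every y ∈ ℝⁿ the vector field x ↦ k(x, y)(y − x) has a symmetric Jacobian everywhere (equivalently, is conservative). Then k is radial: there exists a function φ : [0, ∞) → ℝ such that k(x, y) = φ(‖x − y‖²) for all x, y ∈ ℝⁿ. -/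
/-!
Symmetry of the Jacobian of `x ↦ k(x, y) (y - x)` forces `∇ₓ k(x, y)` to be parallel to
`y - x`, so `k(·, y)` has zero derivative along the spheres centred at `y`; as these spheres are
connected when `n ≥ 2`, `k(x, y)` depends only on `y` and `‖x - y‖`. By symmetry of `k`, the value
`k(y + e, y)` for a fixed `e` does not change when `y` moves to any `y'` with `‖y - y'‖ ≤ 2‖e‖`
(rotate `x` about `y` onto a common point `m` of the two spheres of radius `‖e‖`, then swap the
roles of `m` and the centres), hence it does not depend on `y` at all. The diagonal follows by
continuity.
-/

open scoped RealInnerProductSpace Topology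

theorem isSymmetric_of_apply_single_symm {ι : Type*} [Fintype ι] [DecidableEq ι]
    {A : EuclideanSpace ℝ ι →L[ℝ] EuclideanSpace ℝ ι}
    (h : ∀ i j, A (EuclideanSpace.single j 1) i = A (EuclideanSpace.single i 1) j) :
    (A : EuclideanSpace ℝ ι →ₗ[ℝ] EuclideanSpace ℝ ι).IsSymmetric := by
  rw [← LinearMap.isHermitian_toMatrix_iff (EuclideanSpace.basisFun ι ℝ)]
  ext i j
  simp [LinearMap.toMatrix_apply, h]

variable {E : Type*} [NormedAddCommGroup E] [InnerProductSpace ℝ E]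

theorem fderiv_apply_eq_zero_of_isSymmetric {f : E → ℝ} {x y : E} (hf : DifferentiableAt ℝ f x)
    (hsymm : (fderiv ℝ (fun x' => f x' • (y - x')) x : E →ₗ[ℝ] E).IsSymmetric) (hxy : x ≠ y)
    {w : E} (hw : ⟪x - y, w⟫ = 0) : fderiv ℝ f x w = 0 := by
  have hF : HasFDerivAt (fun x' => f x' • (y - x'))
      (f x • -ContinuousLinearMap.id ℝ E + (fderiv ℝ f x).smulRight (y - x)) x :=
    hf.hasFDerivAt.smul ((hasFDerivAt_id x).const_sub y)
  have hJ : ∀ v, fderiv ℝ (fun x' => f x' • (y - x')) x v =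
      fderiv ℝ f x v • (y - x) - f x • v := by
    intro v
    rw [hF.fderiv]
    simp only [add_apply, smul_apply, neg_apply, ContinuousLinearMap.id_apply,
      ContinuousLinearMap.smulRight_apply]
    module
  have hw' : ⟪y - x, w⟫ = 0 := by rw [← neg_sub, inner_neg_left, hw, neg_zero]
  -- with `d = y - x`, the symmetry `⟪J d, w⟫ = ⟪d, J w⟫` reads `0 = Df(w) ‖d‖²`
  have key := hsymm (y - x) w
  set d := y - x
  simp only [ContinuousLinearMap.coe_coe, hJ, inner_sub_left, inner_sub_right,
    real_inner_smul_left, real_inner_smul_right, hw', real_inner_self_eq_norm_sq] at key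
  have hd : ‖d‖ ^ 2 ≠ 0 := by positivity [sub_ne_zero.2 hxy.symm]
  exact (mul_eq_zero.1 (by linarith : fderiv ℝ f x w * ‖d‖ ^ 2 = 0)).resolve_right hd

theorem inner_fderiv_eq_zero_of_norm_eventuallyEq {F : Type*} [NormedAddCommGroup F]
    [NormedSpace ℝ F] {g : F → E} {z : F} {c : ℝ} (hg : DifferentiableAt ℝ g z)
    (hc : ∀ᶠ z' in 𝓝 z, ‖g z'‖ = c) (v : F) : ⟪g z, fderiv ℝ g z v⟫ = 0 := by
  have hsq : (‖g ·‖ ^ 2) =ᶠ[𝓝 z] fun _ => c ^ 2 := hc.mono fun _ h => by simp only [h]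
  have h := hg.hasFDerivAt.norm_sq.fderiv.symm.trans (hsq.fderiv_eq.trans (fderiv_const_apply _))
  simpa using congrArg (· v) h

theorem eq_of_norm_sub_eq_of_fderiv_eq_zero (hE : 1 < Module.rank ℝ E) {f : E → ℝ}
    (hf : Differentiable ℝ f) {y : E}
    (htan : ∀ x ≠ y, ∀ w, ⟪x - y, w⟫ = 0 → fderiv ℝ f x w = 0) {x x' : E}
    (h : ‖x - y‖ = ‖x' - y‖) : f x = f x' := by
  obtain hr | hr := (norm_nonneg (x - y)).eq_or_lt
  · obtain rfl : x = y := sub_eq_zero.1 (norm_eq_zero.1 hr.symm)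
    exact congrArg f (sub_eq_zero.1 (norm_eq_zero.1 (h ▸ hr.symm))).symm
  -- `y + g ·` retracts `E ∖ {0}` onto the sphere through `x`, so `f (y + g ·)` has zero derivative
  let g : E → E := fun z => (‖x - y‖ / ‖z‖) • z
  have hg : ∀ z ≠ 0, ‖g z‖ = ‖x - y‖ := fun z hz => by
    simp [g, norm_smul, norm_ne_zero_iff.2 hz]
  have hgd : ∀ z ≠ 0, DifferentiableAt ℝ g z := fun z hz => by
    have hnorm : DifferentiableAt ℝ (‖·‖) z := differentiableAt_fun_id.norm ℝ hz
    have := norm_ne_zero_iff.2 hz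
    simp only [g]
    fun_prop (disch := assumption)
  have hfg : ∀ z ≠ 0, DifferentiableAt ℝ (fun z => f (y + g z)) z := fun z hz =>
    (hf _).comp z ((hgd z hz).const_add y)
  have hfg' : ∀ z ≠ 0, fderiv ℝ (fun z => f (y + g z)) z = 0 := fun z hz => by
    ext v
    rw [fderiv_fun_comp z (hf _) ((hgd z hz).const_add y), fderiv_const_add]
    refine htan _ ?_ _ ?_
    · intro he
      rw [add_eq_left] at he
      exact hr.ne' (by rw [← hg z hz, he, norm_zero])
    · rw [add_sub_cancel_left]
      exact inner_fderiv_eq_zero_of_norm_eventuallyEq (hgd z hz)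
        ((isOpen_compl_singleton.eventually_mem hz).mono hg) v
  have key := isOpen_compl_singleton.is_const_of_fderiv_eq_zero
    (isConnected_compl_singleton_of_one_lt_rank hE 0).isPreconnected
    (fun z hz => (hfg z hz).differentiableWithinAt) hfg'
    (x := x - y) (y := x' - y) (norm_pos_iff.1 hr) (norm_pos_iff.1 (h ▸ hr))
  simpa [g, ← h, hr.ne'] using key

theorem exists_norm_sub_eq_and_norm_sub_eq (hE : 1 < Module.rank ℝ E) {y z : E} {r : ℝ}
    (h : ‖z - y‖ ≤ 2 * r) : ∃ m, ‖m - y‖ = r ∧ ‖m - z‖ = r := by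
  have : Nontrivial E := rank_pos_iff_nontrivial.1 (zero_lt_one.trans hE)
  have hr : 0 ≤ r := by linarith [norm_nonneg (z - y)]
  obtain ⟨u, hu, hzu⟩ : ∃ u : E, ‖u‖ = 1 ∧ z = y + ‖z - y‖ • u := by
    rcases eq_or_ne z y with rfl | hzy
    · obtain ⟨u, hu⟩ := exists_norm_eq E zero_le_one
      exact ⟨u, hu, by simp⟩
    · have hd : ‖z - y‖ ≠ 0 := norm_ne_zero_iff.2 (sub_ne_zero.2 hzy)
      exact ⟨‖z - y‖⁻¹ • (z - y), by simp [norm_smul, hd], by simp [smul_smul, hd]⟩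
  have hd0 : 0 ≤ ‖z - y‖ := norm_nonneg _
  generalize ‖z - y‖ = d at h hzu hd0
  subst hzu
  have hnear : ‖(y + r • u) - (y + d • u)‖ ≤ r := by
    rw [show y + r • u - (y + d • u) = (r - d) • u by module, norm_smul, hu, mul_one,
      Real.norm_eq_abs, abs_le]
    constructor <;> linarith
  have hfar : r ≤ ‖(y - r • u) - (y + d • u)‖ := by
    rw [show y - r • u - (y + d • u) = -((r + d) • u) by module, norm_neg, norm_smul, hu,
      mul_one, Real.norm_eq_abs]
    exact le_abs.2 (Or.inl (by linarith))
  -- intermediate value theorem for the distance to `z` on the connected sphere `sphere y r`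
  obtain ⟨m, hm, hmz⟩ := (isConnected_sphere hE y hr).isPreconnected.intermediate_value
    (f := fun p => ‖p - (y + d • u)‖) (by simp [norm_smul, hu, abs_of_nonneg hr])
    (by simp [norm_smul, hu, abs_of_nonneg hr]) (by fun_prop) ⟨hnear, hfar⟩
  exact ⟨m, mem_sphere_iff_norm.1 hm, hmz⟩

variable {β : Type*} {k : E → E → β}

theorem eq_of_norm_sub_eq_of_norm_sub_le (hE : 1 < Module.rank ℝ E)
    (hsymm : ∀ x y, k x y = k y x) (hsph : ∀ y x x', ‖x - y‖ = ‖x' - y‖ → k x y = k x' y)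
    {x y x' y' : E} {r : ℝ} (hx : ‖x - y‖ = r) (hx' : ‖x' - y'‖ = r) (h : ‖y' - y‖ ≤ 2 * r) :
    k x y = k x' y' := by
  obtain ⟨m, hmy, hmy'⟩ := exists_norm_sub_eq_and_norm_sub_eq hE h
  calc k x y = k m y := hsph y x m (hx.trans hmy.symm)
    _ = k y m := hsymm m y
    _ = k y' m := hsph m y y' (by rw [norm_sub_rev, hmy, norm_sub_rev, hmy'])
    _ = k m y' := hsymm y' m
    _ = k x' y' := hsph y' m x' (hmy'.trans hx'.symm)

theorem eq_of_norm_sub_eq_of_pos (hE : 1 < Module.rank ℝ E)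
    (hsymm : ∀ x y, k x y = k y x) (hsph : ∀ y x x', ‖x - y‖ = ‖x' - y‖ → k x y = k x' y)
    {x y x' y' : E} {r : ℝ} (hr : 0 < r) (hx : ‖x - y‖ = r) (hx' : ‖x' - y'‖ = r) :
    k x y = k x' y' := by
  have : Nontrivial E := rank_pos_iff_nontrivial.1 (zero_lt_one.trans hE)
  obtain ⟨e, he⟩ := exists_norm_eq E hr.le
  have hpair : ∀ {x z}, ‖x - z‖ = r → k x z = k (z + e) z := fun hxz =>
    hsph _ _ _ (by rw [hxz, add_sub_cancel_left, he])
  have hloc : IsLocallyConstant fun z => k (z + e) z := by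
    refine (IsLocallyConstant.iff_eventually_eq _).2 fun z => Filter.eventually_of_mem
      (Metric.ball_mem_nhds z (by positivity : 0 < 2 * r)) fun z' hz' => ?_
    rw [mem_ball_iff_norm] at hz'
    exact eq_of_norm_sub_eq_of_norm_sub_le hE hsymm hsph (r := r)
      (by rw [add_sub_cancel_left, he]) (by rw [add_sub_cancel_left, he])
      (by rw [norm_sub_rev]; exact hz'.le)
  rw [hpair hx, hpair hx', hloc.apply_eq_of_preconnectedSpace y y']

theorem eq_of_norm_sub_eq [TopologicalSpace β] [T2Space β] (hE : 1 < Module.rank ℝ E)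
    (hk : Continuous fun p : E × E => k p.1 p.2) (hsymm : ∀ x y, k x y = k y x)
    (hsph : ∀ y x x', ‖x - y‖ = ‖x' - y‖ → k x y = k x' y)
    {x y x' y' : E} (h : ‖x - y‖ = ‖x' - y'‖) : k x y = k x' y' := by
  rcases (norm_nonneg (x - y)).eq_or_lt with h0 | hpos
  · obtain rfl : x = y := sub_eq_zero.1 (norm_eq_zero.1 h0.symm)
    obtain rfl : x' = y' := sub_eq_zero.1 (norm_eq_zero.1 (h ▸ h0.symm))
    have : Nontrivial E := rank_pos_iff_nontrivial.1 (zero_lt_one.trans hE)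
    obtain ⟨e, he⟩ := exists_norm_eq E zero_le_one
    have hc : ∀ z : E, Continuous fun t : ℝ => k (z + t • e) z := fun z =>
      hk.comp (f := fun t : ℝ => (z + t • e, z)) (by fun_prop)
    have hext := Continuous.ext_on (dense_compl_singleton (0 : ℝ)) (hc x) (hc x') fun t ht =>
      eq_of_norm_sub_eq_of_pos hE hsymm hsph (r := |t|) (abs_pos.2 ht) (by simp [norm_smul, he])
        (by simp [norm_smul, he])
    simpa using congrFun hext 0
  · exact eq_of_norm_sub_eq_of_pos hE hsymm hsph hpos rfl h.symm

theorem conservative_subfield_implies_radial_general {n : ℕ} (hn : 2 ≤ n)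
    (k : EuclideanSpace ℝ (Fin n) → EuclideanSpace ℝ (Fin n) → ℝ)
    (hk : ContDiff ℝ 1 (fun p : EuclideanSpace ℝ (Fin n) × EuclideanSpace ℝ (Fin n) =>
      k p.1 p.2))
    (hsymm : ∀ x y, k x y = k y x)
    (hcons : ∀ (y x : EuclideanSpace ℝ (Fin n)) (i j : Fin n),
      fderiv ℝ (fun x' => k x' y • (y - x')) x (EuclideanSpace.single j 1) i =
      fderiv ℝ (fun x' => k x' y • (y - x')) x (EuclideanSpace.single i 1) j) :
    ∃ φ : ℝ → ℝ, ∀ x y : EuclideanSpace ℝ (Fin n), k x y = φ (‖x - y‖ ^ 2) := by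
  have hE : 1 < Module.rank ℝ (EuclideanSpace ℝ (Fin n)) := by
    rw [← Module.finrank_eq_rank, finrank_euclideanSpace_fin]
    exact_mod_cast hn
  have hky : ∀ y, Differentiable ℝ (k · y) := fun y =>
    (hk.comp (contDiff_id.prodMk contDiff_const)).differentiable one_ne_zero
  have hsph : ∀ y x x', ‖x - y‖ = ‖x' - y‖ → k x y = k x' y := fun y _ _ =>
    eq_of_norm_sub_eq_of_fderiv_eq_zero hE (hky y) fun x hxy _ hw =>
      fderiv_apply_eq_zero_of_isSymmetric (hky y x)
        (isSymmetric_of_apply_single_symm (hcons y x)) hxy hw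
  let e : EuclideanSpace ℝ (Fin n) := EuclideanSpace.single ⟨0, by omega⟩ 1
  refine ⟨fun t => k (√t • e) 0, fun x y => eq_of_norm_sub_eq hE hk.continuous hsymm hsph ?_⟩
  simp [e, norm_smul]

/-- Let `n ≥ 2` and let `k` be a C¹ symmetric kernel on ℝⁿ with
`k(x,y) ≠ 0` for `x ≠ y`. If for every `y` the vector field `x ↦ k(x,y)(y − x)` has a
symmetric Jacobian everywhere (equivalently, is conservative), then `k` is radial:
`k(x,y) = φ(‖x − y‖²)` for some `φ`. -/
theorem conservative_subfield_implies_radial {n : ℕ} (hn : 2 ≤ n)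
    (k : EuclideanSpace ℝ (Fin n) → EuclideanSpace ℝ (Fin n) → ℝ)
    (hk : ContDiff ℝ 1 (fun p : EuclideanSpace ℝ (Fin n) × EuclideanSpace ℝ (Fin n) =>
      k p.1 p.2))
    (hsymm : ∀ x y, k x y = k y x)
    (hne : ∀ x y : EuclideanSpace ℝ (Fin n), x ≠ y → k x y ≠ 0)
    (hcons : ∀ (y x : EuclideanSpace ℝ (Fin n)) (i j : Fin n),
      fderiv ℝ (fun x' => k x' y • (y - x')) x (EuclideanSpace.single j 1) i =
      fderiv ℝ (fun x' => k x' y • (y - x')) x (EuclideanSpace.single i 1) j) :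
    ∃ φ : ℝ → ℝ, ∀ x y : EuclideanSpace ℝ (Fin n), k x y = φ (‖x - y‖ ^ 2) :=
  conservative_subfield_implies_radial_general hn k hk hsymm hcons
end

section
/- Let k : ℝⁿ × ℝⁿ → ℝ be a continuously differentiable kernel. For a finite family of points y₁, …, y_M ∈ ℝⁿ, let V_{y₁,…,y_M}(x) = (1/M) Σₘ k(x, yₘ)(yₘ − x) and let C_{y₁,…,y_M}(x) denote the antisymmetric part of its Jacobian, i.e., the matrix with entries ∂ᵢV_j(x) − ∂ⱼV_i(x). Suppose there exists a single matrix-valued function C : ℝⁿ → ℝ^{n×n} such that C_{y₁,…,y_M} = C for every finite family y₁, …, y_M (i.e., the curl is invariant to the choice of points). Then C(x) = 0 for all x ∈ ℝⁿ, and hence C_{y₁,…,y_M} ≡ 0 for every finite family. -/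
/-! Take the single point `y₁ = x`: the field is then `x' ↦ k(x', x) (x − x')`, which on the line
through `x` in direction `v` takes values in `ℝ v`. So every vector is an eigenvector of its
Jacobian at `x`, the Jacobian is diagonal, its curl at `x` vanishes, and `C(x)` is that curl. -/

section
variable {𝕜 : Type*} [NontriviallyNormedField 𝕜] {E G : Type*}
  [NormedAddCommGroup E] [NormedSpace 𝕜 E] [NormedAddCommGroup G] [NormedSpace 𝕜 G]

theorem map_fderiv_smul_sub_eq_zero (φ : E → 𝕜) (y : E) {v : E} (ℓ : E →L[𝕜] G)
    (hv : ℓ v = 0) : ℓ (fderiv 𝕜 (fun x => φ x • (y - x)) y v) = 0 := by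
  by_cases hF : DifferentiableAt 𝕜 (fun x => φ x • (y - x)) y
  swap
  · simp [fderiv_zero_of_not_differentiableAt hF]
  have hline : HasDerivAt (fun t : 𝕜 => y + t • v) v 0 := by
    simpa using ((hasDerivAt_id (0 : 𝕜)).smul_const v).const_add y
  have hcomp := (ℓ.hasFDerivAt.comp y hF.hasFDerivAt).comp_hasDerivAt_of_eq (0 : 𝕜)
    hline (by simp)
  have hzero : (ℓ ∘ fun x => φ x • (y - x)) ∘ (fun t : 𝕜 => y + t • v) = fun _ => 0 := by
    funext t
    simp [hv]
  rw [hzero] at hcomp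
  exact hcomp.unique (hasDerivAt_const 0 0)

end

theorem fderiv_smul_sub_apply_single_of_ne {ι : Type*} [Fintype ι] [DecidableEq ι]
    (φ : EuclideanSpace ℝ ι → ℝ) (y : EuclideanSpace ℝ ι) {i j : ι} (hij : i ≠ j) :
    fderiv ℝ (fun x => φ x • (y - x)) y (EuclideanSpace.single i 1) j = 0 :=
  map_fderiv_smul_sub_eq_zero φ y (EuclideanSpace.proj j) (by simp [hij.symm])

theorem fderiv_smul_sub_antisymm_eq_zero {ι : Type*} [Fintype ι] [DecidableEq ι]
    (φ : EuclideanSpace ℝ ι → ℝ) (y : EuclideanSpace ℝ ι) (i j : ι) :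
    fderiv ℝ (fun x => φ x • (y - x)) y (EuclideanSpace.single i 1) j -
      fderiv ℝ (fun x => φ x • (y - x)) y (EuclideanSpace.single j 1) i = 0 := by
  rcases eq_or_ne i j with rfl | hij
  · exact sub_self _
  · rw [fderiv_smul_sub_apply_single_of_ne φ y hij,
      fderiv_smul_sub_apply_single_of_ne φ y hij.symm, sub_self]

theorem invariant_curl_of_drift_subfield_is_zero_general {n : ℕ}
    (k : EuclideanSpace ℝ (Fin n) → EuclideanSpace ℝ (Fin n) → ℝ)
    (C : EuclideanSpace ℝ (Fin n) → Matrix (Fin n) (Fin n) ℝ)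
    (hC : ∀ (M : ℕ), 0 < M → ∀ (y : Fin M → EuclideanSpace ℝ (Fin n))
      (x : EuclideanSpace ℝ (Fin n)) (i j : Fin n),
      fderiv ℝ (fun x' => (1 / (M : ℝ)) • ∑ m, k x' (y m) • (y m - x')) x
          (EuclideanSpace.single i 1) j -
        fderiv ℝ (fun x' => (1 / (M : ℝ)) • ∑ m, k x' (y m) • (y m - x')) x
          (EuclideanSpace.single j 1) i = C x i j) :
    (∀ x i j, C x i j = 0) ∧
    ∀ (M : ℕ), 0 < M → ∀ (y : Fin M → EuclideanSpace ℝ (Fin n))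
      (x : EuclideanSpace ℝ (Fin n)) (i j : Fin n),
      fderiv ℝ (fun x' => (1 / (M : ℝ)) • ∑ m, k x' (y m) • (y m - x')) x
          (EuclideanSpace.single i 1) j -
        fderiv ℝ (fun x' => (1 / (M : ℝ)) • ∑ m, k x' (y m) • (y m - x')) x
          (EuclideanSpace.single j 1) i = 0 := by
  have hC_zero : ∀ x i j, C x i j = 0 := by
    intro x i j
    have hsingle := hC 1 one_pos (fun _ => x) x i j
    simp only [Nat.cast_one, div_one, one_smul, Finset.univ_unique, Finset.sum_singleton]
      at hsingle
    rw [← hsingle, fderiv_smul_sub_antisymm_eq_zero]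
  refine ⟨hC_zero, fun M hM y x i j => ?_⟩
  rw [hC M hM y x i j, hC_zero]

/-- For a C¹ kernel `k`, if the curl (antisymmetric part of the
Jacobian) of the unnormalized drift sub-field
`V(x) = (1/M) Σₘ k(x,yₘ)(yₘ − x)` is the same matrix-valued function `C` for every
finite family of points, then `C ≡ 0`, and hence the curl vanishes for every family. -/
theorem invariant_curl_of_drift_subfield_is_zero {n : ℕ}
    (k : EuclideanSpace ℝ (Fin n) → EuclideanSpace ℝ (Fin n) → ℝ)
    (hk : ContDiff ℝ 1 (fun p : EuclideanSpace ℝ (Fin n) × EuclideanSpace ℝ (Fin n) =>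
      k p.1 p.2))
    (C : EuclideanSpace ℝ (Fin n) → Matrix (Fin n) (Fin n) ℝ)
    (hC : ∀ (M : ℕ), 0 < M → ∀ (y : Fin M → EuclideanSpace ℝ (Fin n))
      (x : EuclideanSpace ℝ (Fin n)) (i j : Fin n),
      fderiv ℝ (fun x' => (1 / (M : ℝ)) • ∑ m, k x' (y m) • (y m - x')) x
          (EuclideanSpace.single i 1) j -
        fderiv ℝ (fun x' => (1 / (M : ℝ)) • ∑ m, k x' (y m) • (y m - x')) x
          (EuclideanSpace.single j 1) i = C x i j) :
    (∀ x i j, C x i j = 0) ∧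
    ∀ (M : ℕ), 0 < M → ∀ (y : Fin M → EuclideanSpace ℝ (Fin n))
      (x : EuclideanSpace ℝ (Fin n)) (i j : Fin n),
      fderiv ℝ (fun x' => (1 / (M : ℝ)) • ∑ m, k x' (y m) • (y m - x')) x
          (EuclideanSpace.single i 1) j -
        fderiv ℝ (fun x' => (1 / (M : ℝ)) • ∑ m, k x' (y m) • (y m - x')) x
          (EuclideanSpace.single j 1) i = 0 :=
  invariant_curl_of_drift_subfield_is_zero_general k C hC
end

section
/- Let k : ℝⁿ × ℝⁿ → ℝ be a continuously differentiable kernel. For finite families y⁺₁, …, y⁺_M ∈ ℝⁿ and y⁻₁, …, y⁻_N ∈ ℝⁿ define V⁺(x) = (1/M) Σₘ k(x, y⁺ₘ)(y⁺ₘ − x), V⁻(x) = (1/N) Σⱼ k(x, y⁻ⱼ)(y⁻ⱼ − x), and the unnormalized drift field V = V⁺ − V⁻. If V is conservative (has symmetric Jacobian everywhere) for every choice of finite families y⁺₁, …, y⁺_M and y⁻₁, …, y⁻_N, then V⁺ is conservative for every finite family y⁺₁, …, y⁺_M, and likewise V⁻ is conservative for every finite family y⁻₁, …, y⁻_N. 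-/
/-! Choose the other family to be the single sample `x`, the very point where the Jacobian is
evaluated. Its field `x' ↦ k x' x • (x - x')` has Jacobian `-k x x • id` at `x`, because the factor
`x - x'` vanishes there; this is symmetric, so subtracting it from (or adding it to) the
conservative drift field leaves a field with symmetric Jacobian at `x`. -/

open ContinuousLinearMap

section SymmetricJacobian

variable {ι : Type*} [Fintype ι] [DecidableEq ι]

def HasSymmJacobianAt (F : EuclideanSpace ℝ ι → EuclideanSpace ℝ ι) (x : EuclideanSpace ℝ ι) :
    Prop :=
  ∀ i j, fderiv ℝ F x (EuclideanSpace.single j 1) i = fderiv ℝ F x (EuclideanSpace.single i 1) j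

theorem hasSymmJacobianAt_of_hasFDerivAt_smul_id {F : EuclideanSpace ℝ ι → EuclideanSpace ℝ ι}
    {x : EuclideanSpace ℝ ι} {c : ℝ} (hF : HasFDerivAt F (c • ContinuousLinearMap.id ℝ _) x) :
    HasSymmJacobianAt F x := by
  intro i j
  simp [hF.fderiv, eq_comm]

variable {F G : EuclideanSpace ℝ ι → EuclideanSpace ℝ ι} {x : EuclideanSpace ℝ ι}

theorem HasSymmJacobianAt.of_sub_left (hFG : HasSymmJacobianAt (fun x' => F x' - G x') x)
    (hG : HasSymmJacobianAt G x) (hF' : DifferentiableAt ℝ F x) (hG' : DifferentiableAt ℝ G x) :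
    HasSymmJacobianAt F x := by
  intro i j
  have h := hFG i j
  simp only [fderiv_fun_sub hF' hG', sub_apply, PiLp.sub_apply] at h
  linarith [hG i j]

theorem HasSymmJacobianAt.of_sub_right (hFG : HasSymmJacobianAt (fun x' => F x' - G x') x)
    (hF : HasSymmJacobianAt F x) (hF' : DifferentiableAt ℝ F x) (hG' : DifferentiableAt ℝ G x) :
    HasSymmJacobianAt G x := by
  intro i j
  have h := hFG i j
  simp only [fderiv_fun_sub hF' hG', sub_apply, PiLp.sub_apply] at h
  linarith [hF i j]

end SymmetricJacobian

section KernelField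

variable {E : Type*} [NormedAddCommGroup E] [NormedSpace ℝ E]

theorem differentiable_smul_sum_kernel_smul_sub {ι : Type*} [Fintype ι] {k : E → E → ℝ}
    (hk : Differentiable ℝ (fun p : E × E => k p.1 p.2)) (c : ℝ) (y : ι → E) :
    Differentiable ℝ (fun x => c • ∑ m, k x (y m) • (y m - x)) := by
  refine Differentiable.fun_const_smul (Differentiable.fun_sum fun m _ => ?_) c
  exact (hk.comp (differentiable_id.prodMk (differentiable_const _))).smul
    ((differentiable_const _).sub differentiable_id)

theorem hasFDerivAt_smul_sub_self {f : E → ℝ} {x : E} (hf : DifferentiableAt ℝ f x) :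
    HasFDerivAt (fun x' => f x' • (x - x')) (-f x • ContinuousLinearMap.id ℝ E) x := by
  refine (hf.hasFDerivAt.smul ((hasFDerivAt_id x).const_sub x)).congr_fderiv ?_
  ext v
  simp

end KernelField

/-- For a C¹ kernel `k`, if the unnormalized drift field
`V = V⁺ − V⁻` has a symmetric Jacobian everywhere (is conservative) for every choice of
finite families `y⁺₁,…,y⁺_M` and `y⁻₁,…,y⁻_N`, then `V⁺` has a symmetric Jacobian
everywhere for every finite family, and likewise `V⁻`. -/
theorem subfields_conservative_of_drift_conservative {n : ℕ}
    (k : EuclideanSpace ℝ (Fin n) → EuclideanSpace ℝ (Fin n) → ℝ)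
    (hk : ContDiff ℝ 1 (fun p : EuclideanSpace ℝ (Fin n) × EuclideanSpace ℝ (Fin n) =>
      k p.1 p.2))
    (hcons : ∀ (M N : ℕ), 0 < M → 0 < N →
      ∀ (yp : Fin M → EuclideanSpace ℝ (Fin n)) (yn : Fin N → EuclideanSpace ℝ (Fin n))
        (x : EuclideanSpace ℝ (Fin n)) (i j : Fin n),
      fderiv ℝ (fun x' => (1 / (M : ℝ)) • ∑ m, k x' (yp m) • (yp m - x')
                        - (1 / (N : ℝ)) • ∑ l, k x' (yn l) • (yn l - x')) x
          (EuclideanSpace.single j 1) i =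
        fderiv ℝ (fun x' => (1 / (M : ℝ)) • ∑ m, k x' (yp m) • (yp m - x')
                          - (1 / (N : ℝ)) • ∑ l, k x' (yn l) • (yn l - x')) x
          (EuclideanSpace.single i 1) j) :
    (∀ (M : ℕ), 0 < M → ∀ (yp : Fin M → EuclideanSpace ℝ (Fin n))
        (x : EuclideanSpace ℝ (Fin n)) (i j : Fin n),
      fderiv ℝ (fun x' => (1 / (M : ℝ)) • ∑ m, k x' (yp m) • (yp m - x')) x
          (EuclideanSpace.single j 1) i =
        fderiv ℝ (fun x' => (1 / (M : ℝ)) • ∑ m, k x' (yp m) • (yp m - x')) x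
          (EuclideanSpace.single i 1) j) ∧
    (∀ (N : ℕ), 0 < N → ∀ (yn : Fin N → EuclideanSpace ℝ (Fin n))
        (x : EuclideanSpace ℝ (Fin n)) (i j : Fin n),
      fderiv ℝ (fun x' => (1 / (N : ℝ)) • ∑ l, k x' (yn l) • (yn l - x')) x
          (EuclideanSpace.single j 1) i =
        fderiv ℝ (fun x' => (1 / (N : ℝ)) • ∑ l, k x' (yn l) • (yn l - x')) x
          (EuclideanSpace.single i 1) j) := by
  have hk' := hk.differentiable one_ne_zero
  have hfield (M : ℕ) (y : Fin M → EuclideanSpace ℝ (Fin n)) :=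
    differentiable_smul_sum_kernel_smul_sub hk' (1 / (M : ℝ)) y
  have hself (x : EuclideanSpace ℝ (Fin n)) : HasSymmJacobianAt
      (fun x' => (1 / ((1 : ℕ) : ℝ)) • ∑ _l : Fin 1, k x' x • (x - x')) x := by
    refine hasSymmJacobianAt_of_hasFDerivAt_smul_id (c := -k x x) ?_
    simp only [Nat.cast_one, div_one, one_smul, Finset.univ_unique, Finset.sum_singleton]
    exact hasFDerivAt_smul_sub_self ((hk'.comp (differentiable_id.prodMk (differentiable_const x))) x)
  constructor
  · intro M hM yp x
    exact HasSymmJacobianAt.of_sub_left (hcons M 1 hM one_pos yp (fun _ => x) x) (hself x)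
      (hfield M yp x) (hfield 1 _ x)
  · intro N hN yn x
    exact HasSymmJacobianAt.of_sub_right (hcons 1 N one_pos hN (fun _ => x) yn x) (hself x)
      (hfield 1 _ x) (hfield N yn x)
end

section
/- Let σ > 0 and let k(x, y) = exp(−‖x − y‖/σ) be the Laplacian kernel on ℝⁿ. Then: (1) the function k♯(x, y) := σ(‖x − y‖ + σ) · k(x, y) satisfies ∇ₓ k♯(x, y) = k(x, y)(y − x) for all x, y ∈ ℝⁿ (including x = y, where both sides vanish); and (2) for all x ≠ y, the function k♭(x, y) := k(x, y) / (σ ‖x − y‖) satisfies ∇ₓ k(x, y) = k♭(x, y)(y − x). -/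
/-!
Both kernels are radial, `f ‖x - y‖`, so off the diagonal the chain rule gives the gradient
`(f' ‖x - y‖ / ‖x - y‖) • (x - y)`. The sharp profile `f t = σ (t + σ) exp (-t / σ)` has
`f' t = -t exp (-t / σ)`: the factor `t` cancels the division by the norm, and `f' 0 = 0` gives
`f ‖x - y‖ - f 0 = o(‖x - y‖)`, so the gradient also exists, and vanishes, on the diagonal where
the norm itself is not differentiable.
-/

open Real Filter Topology

section NormComposition

variable {E : Type*} [NormedAddCommGroup E] [InnerProductSpace ℝ E]

theorem hasFDerivAt_norm_sub {x y : E} (h : x ≠ y) :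
    HasFDerivAt (fun x' => ‖x' - y‖) (‖x - y‖⁻¹ • innerSL ℝ (x - y)) x := by
  have hsqrt := ((hasFDerivAt_id x).sub_const y).norm_sq.sqrt (by simpa using sub_ne_zero.2 h)
  simp only [id, Real.sqrt_sq (norm_nonneg _)] at hsqrt
  convert hsqrt using 1
  ext v
  simp
  field_simp

variable [CompleteSpace E]

theorem HasDerivAt.hasGradientAt_comp_norm_sub {f : ℝ → ℝ} {f' : ℝ} {x y : E} (h : x ≠ y)
    (hf : HasDerivAt f f' ‖x - y‖) :
    HasGradientAt (fun x' => f ‖x' - y‖) ((f' / ‖x - y‖) • (x - y)) x := by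
  rw [hasGradientAt_iff_hasFDerivAt]
  refine (hf.comp_hasFDerivAt x (hasFDerivAt_norm_sub h)).congr_fderiv ?_
  ext v
  simp [InnerProductSpace.toDual_apply_apply]
  ring

theorem HasDerivWithinAt.hasGradientAt_comp_norm_sub_self {f : ℝ → ℝ} (y : E)
    (hf : HasDerivWithinAt f 0 (Set.Ici 0) 0) :
    HasGradientAt (fun x' => f ‖x' - y‖) 0 y := by
  have hnorm : Tendsto (fun x' => ‖x' - y‖) (𝓝 y) (𝓝[≥] 0) :=
    tendsto_nhdsWithin_iff.2 ⟨tendsto_norm_sub_self y,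
      Eventually.of_forall fun _ => norm_nonneg _⟩
  rw [hasGradientAt_iff_isLittleO]
  have := (hasDerivWithinAt_iff_isLittleO.1 hf).comp_tendsto hnorm
  simpa [Function.comp_def] using this.norm_right

end NormComposition

theorem hasDerivAt_exp_neg_div (σ t : ℝ) :
    HasDerivAt (fun t => exp (-t / σ)) (-(exp (-t / σ) / σ)) t := by
  refine ((hasDerivAt_neg' t).div_const σ).exp.congr_deriv ?_
  ring

theorem hasDerivAt_mul_exp_neg_div {σ : ℝ} (hσ : σ ≠ 0) (t : ℝ) :
    HasDerivAt (fun t => σ * (t + σ) * exp (-t / σ)) (-(t * exp (-t / σ))) t := by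
  refine ((((hasDerivAt_id' t).add_const σ).const_mul σ).mul
    (hasDerivAt_exp_neg_div σ t)).congr_deriv ?_
  field_simp
  ring

/-- **Laplacian sharp and flat.** For the Laplacian kernel
`k(x,y) = exp(−‖x−y‖/σ)`: (1) `k♯(x,y) = σ(‖x−y‖+σ)·k(x,y)` satisfies
`∇ₓ k♯(x,y) = k(x,y)(y − x)` for all `x, y` (including `x = y`), and
(2) for `x ≠ y`, `k♭(x,y) = k(x,y)/(σ‖x−y‖)` satisfies `∇ₓ k(x,y) = k♭(x,y)(y − x)`. -/
theorem laplacian_sharp_flat {n : ℕ} (σ : ℝ) (hσ : 0 < σ)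
    (k ks : EuclideanSpace ℝ (Fin n) → EuclideanSpace ℝ (Fin n) → ℝ)
    (kb : EuclideanSpace ℝ (Fin n) → EuclideanSpace ℝ (Fin n) → ℝ)
    (hk : ∀ x y : EuclideanSpace ℝ (Fin n), k x y = Real.exp (-‖x - y‖ / σ))
    (hks : ∀ x y, ks x y = σ * (‖x - y‖ + σ) * k x y)
    (hkb : ∀ x y, kb x y = k x y / (σ * ‖x - y‖)) :
    (∀ x y : EuclideanSpace ℝ (Fin n),
      HasGradientAt (fun x' => ks x' y) (k x y • (y - x)) x) ∧
    (∀ x y : EuclideanSpace ℝ (Fin n), x ≠ y →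
      HasGradientAt (fun x' => k x' y) (kb x y • (y - x)) x) := by
  refine ⟨fun x y => ?_, fun x y hxy => ?_⟩
  · simp only [hks, hk]
    obtain rfl | hxy := eq_or_ne x y
    · have hf := (hasDerivAt_mul_exp_neg_div hσ.ne' 0).hasDerivWithinAt (s := Set.Ici 0)
      rw [zero_mul, neg_zero] at hf
      simpa using hf.hasGradientAt_comp_norm_sub_self x
    · convert (hasDerivAt_mul_exp_neg_div hσ.ne' _).hasGradientAt_comp_norm_sub hxy using 1
      have hr : ‖x - y‖ ≠ 0 := norm_ne_zero_iff.2 (sub_ne_zero.2 hxy)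
      rw [← neg_sub x y, smul_neg, ← neg_smul]
      congr 1
      field_simp
  · simp only [hkb, hk]
    convert (hasDerivAt_exp_neg_div σ _).hasGradientAt_comp_norm_sub hxy using 1
    have hr : ‖x - y‖ ≠ 0 := norm_ne_zero_iff.2 (sub_ne_zero.2 hxy)
    rw [← neg_sub x y, smul_neg, ← neg_smul]
    congr 1
    field_simp
end

section
/- Let σ > 0 and let k(x, y) = (1 + ‖x − y‖²/σ²)^{−2} be the rational quadratic kernel on ℝⁿ. Then the functions k♯(x, y) := (σ²/2)(1 + ‖x − y‖²/σ²)^{−1} and k♭(x, y) := (4/σ²)(1 + ‖x − y‖²/σ²)^{−3} satisfy, for all x, y ∈ ℝⁿ: ∇ₓ k♯(x, y) = k(x, y)(y − x) and ∇ₓ k(x, y) = k♭(x, y)(y − x). Equivalently, k♯ = (σ²/2) k^{1/2} and k♭ = (4/σ²) k^{3/2}. -/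
/-! All three kernels are radial, `x ↦ φ (‖x - y‖ ^ 2)` with `φ t = c (1 + t / σ²) ^ m`, and the
chain rule gives `∇ₓ φ (‖x - y‖ ^ 2) = -2 φ' (‖x - y‖ ^ 2) • (y - x)`. Differentiating
`(1 + t / σ²) ^ m` lowers the exponent by one and produces the factor `m / σ²`, which turns
the sharp (`m = -1`) into the kernel and the kernel (`m = -2`) into its flat. -/

open InnerProductSpace

theorem HasDerivAt.hasGradientAt_comp_norm_sub_sq {E : Type*} [NormedAddCommGroup E]
    [InnerProductSpace ℝ E] [CompleteSpace E] {φ : ℝ → ℝ} {φ' : ℝ} {x y : E}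
    (hφ : HasDerivAt φ φ' (‖x - y‖ ^ 2)) :
    HasGradientAt (fun x' => φ (‖x' - y‖ ^ 2)) ((-2 * φ') • (y - x)) x := by
  have hnorm : HasFDerivAt (fun x' : E => ‖x' - y‖ ^ 2) (2 • innerSL ℝ (x - y)) x := by
    simpa using ((hasFDerivAt_id x).sub_const y).norm_sq
  rw [hasGradientAt_iff_hasFDerivAt]
  refine (hφ.comp_hasFDerivAt x hnorm).congr_fderiv ?_
  ext v
  simp only [map_sub, smul_apply, sub_apply, coe_innerSL_apply, nsmul_eq_mul, Nat.cast_ofNat,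
    smul_eq_mul, neg_mul, neg_smul, map_neg, map_smul, neg_apply, toDual_apply_apply]
  ring

theorem hasDerivAt_one_add_div_sq_zpow (σ : ℝ) (m : ℤ) {t : ℝ} (ht : 0 ≤ t) :
    HasDerivAt (fun s : ℝ => (1 + s / σ ^ 2) ^ m)
      (m * (1 + t / σ ^ 2) ^ (m - 1) * (1 / σ ^ 2)) t := by
  have hbase : HasDerivAt (fun s : ℝ => 1 + s / σ ^ 2) (1 / σ ^ 2) t :=
    ((hasDerivAt_id' t).div_const (σ ^ 2)).const_add 1
  exact (hasDerivAt_zpow m _ (Or.inl (by positivity))).comp t hbase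

theorem Real.zpow_rpow_of_mul_eq {u : ℝ} (hu : 0 ≤ u) {m j : ℤ} {r : ℝ} (h : m * r = j) :
    (u ^ m) ^ r = u ^ j := by
  rw [← Real.rpow_intCast_mul hu, h, Real.rpow_intCast]

/-- **rational quadratic sharp and flat.** For the rational quadratic
kernel `k(x,y) = (1 + ‖x−y‖²/σ²)⁻²`, the functions
`k♯(x,y) = (σ²/2)(1 + ‖x−y‖²/σ²)⁻¹` and `k♭(x,y) = (4/σ²)(1 + ‖x−y‖²/σ²)⁻³` satisfy
`∇ₓ k♯(x,y) = k(x,y)(y − x)` and `∇ₓ k(x,y) = k♭(x,y)(y − x)`; equivalently,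
`k♯ = (σ²/2)·k^(1/2)` and `k♭ = (4/σ²)·k^(3/2)`. -/
theorem rational_quadratic_sharp_flat {n : ℕ} (σ : ℝ) (hσ : 0 < σ)
    (k ks kb : EuclideanSpace ℝ (Fin n) → EuclideanSpace ℝ (Fin n) → ℝ)
    (hk : ∀ x y : EuclideanSpace ℝ (Fin n),
      k x y = (1 + ‖x - y‖ ^ 2 / σ ^ 2) ^ (-2 : ℤ))
    (hks : ∀ x y, ks x y = σ ^ 2 / 2 * (1 + ‖x - y‖ ^ 2 / σ ^ 2) ^ (-1 : ℤ))
    (hkb : ∀ x y, kb x y = 4 / σ ^ 2 * (1 + ‖x - y‖ ^ 2 / σ ^ 2) ^ (-3 : ℤ)) :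
    (∀ x y : EuclideanSpace ℝ (Fin n),
      HasGradientAt (fun x' => ks x' y) (k x y • (y - x)) x ∧
      HasGradientAt (fun x' => k x' y) (kb x y • (y - x)) x) ∧
    (∀ x y : EuclideanSpace ℝ (Fin n),
      ks x y = σ ^ 2 / 2 * k x y ^ ((1 : ℝ) / 2) ∧
      kb x y = 4 / σ ^ 2 * k x y ^ ((3 : ℝ) / 2)) := by
  have hσ2 : σ ^ 2 ≠ 0 := by positivity
  refine ⟨fun x y => ⟨?_, ?_⟩, fun x y => ⟨?_, ?_⟩⟩ <;> simp only [hk, hks, hkb]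
  · convert (((hasDerivAt_one_add_div_sq_zpow σ (-1) (sq_nonneg ‖x - y‖)).const_mul
      (σ ^ 2 / 2)).hasGradientAt_comp_norm_sub_sq) using 2
    norm_num
    field_simp
  · convert (hasDerivAt_one_add_div_sq_zpow σ (-2) (sq_nonneg ‖x - y‖)
      ).hasGradientAt_comp_norm_sub_sq using 2
    norm_num
    field_simp
    norm_num
  · rw [Real.zpow_rpow_of_mul_eq (j := -1) (by positivity) (by norm_num)]
  · rw [Real.zpow_rpow_of_mul_eq (j := -3) (by positivity) (by norm_num)]
end

section
/- Let k : ℝⁿ × ℝⁿ → ℝ be a strictly positive kernel, fix x ∈ ℝⁿ and points y⁺₁, …, y⁺_N, y⁻₁, …, y⁻_N ∈ ℝⁿ (equal counts N on both sides). Define the jointly-normalized weights A⁺ⱼ = k(x, y⁺ⱼ) / (Σ_{m=1}^N k(x, y⁺ₘ) + Σ_{m=1}^N k(x, y⁻ₘ)) and A⁻ⱼ = k(x, y⁻ⱼ) / (Σ_{m=1}^N k(x, y⁺ₘ) + Σ_{m=1}^N k(x, y⁻ₘ)), then W⁺ⱼ = A⁺ⱼ · Σ_{m=1}^N A⁻ₘ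 and W⁻ⱼ = A⁻ⱼ · Σ_{m=1}^N A⁺ₘ, and the resulting field V̄(x) = Σ_{j=1}^N W⁺ⱼ y⁺ⱼ − Σ_{j=1}^N W⁻ⱼ y⁻ⱼ. Let Z_p = (1/N) Σⱼ k(x, y⁺ⱼ) and Z_q = (1/N) Σⱼ k(x, y⁻ⱼ). Then V̄(x) = (1/(Z_p + Z_q)²) · (1/N²) Σ_{m=1}^N Σ_{j=1}^N k(x, y⁺ₘ) k(x, y⁻ⱼ) (y⁺ₘ − y⁻ⱼ). In particular, V̄ differs from the drift field V(x) = (1/(Z_p Z_q)) · (1/N²) Σₘ Σⱼ k(x, y⁺ₘ) k(x, y⁻ⱼ)(y⁺ₘ − y⁻ⱼ) by the normalization factor: V̄ carries 1/(Z_p + Z_q)² instead of 1/(Z_p Z_q). -/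
/-!
Expanding `(y⁺ₘ - y⁻ⱼ)` splits the double sum into `(Σ k⁻) Σ k⁺ₘ y⁺ₘ - (Σ k⁺) Σ k⁻ⱼ y⁻ⱼ`, which is
exactly `S² V̄` for the jointly normalized weights, with `S = Σ k⁺ + Σ k⁻ = N (Z_p + Z_q)`.
Comparing with the drift field `V` is then a matter of the scalar `Z_p Z_q`, which is nonzero
because the kernel is positive and `N ≥ 1`.
-/

open Finset

section WeightedSums

variable {ι E : Type*} [Fintype ι] [AddCommGroup E] [Module ℝ E]

theorem sum_sum_mul_smul_sub (a b : ι → ℝ) (y z : ι → E) :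
    ∑ m, ∑ j, (a m * b j) • (y m - z j) =
      (∑ j, b j) • ∑ m, a m • y m - (∑ m, a m) • ∑ j, b j • z j := by
  simp only [smul_sub, sum_sub_distrib, smul_sum, smul_smul]
  rw [sum_comm (f := fun m j => (a m * b j) • z j)]
  congr 1
  · exact sum_congr rfl fun _ _ => by rw [← sum_smul, ← mul_sum, mul_comm]
  · exact sum_congr rfl fun _ _ => by rw [← sum_smul, ← sum_mul]

theorem sum_cross_normalized_smul_sub (a b : ι → ℝ) (y z : ι → E) (S : ℝ) :
    ∑ j, (a j / S * ∑ m, b m / S) • y j - ∑ j, (b j / S * ∑ m, a m / S) • z j =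
      (S ^ 2)⁻¹ • ∑ m, ∑ j, (a m * b j) • (y m - z j) := by
  rw [sum_sum_mul_smul_sub, smul_sub, ← sum_div, ← sum_div]
  simp only [smul_sum, smul_smul]
  congr 1 <;> exact sum_congr rfl fun _ _ => by ring_nf

end WeightedSums

/-- **the implemented field carries the wrong normalization.** With
jointly-normalized softmax weights over the concatenation of positive and negative
samples (equal counts `N`), the resulting field
`V̄(x) = Σⱼ W⁺ⱼ y⁺ⱼ − Σⱼ W⁻ⱼ y⁻ⱼ` equals
`(1/(Z_p + Z_q)²)·(1/N²) ΣₘΣⱼ k(x,y⁺ₘ)k(x,y⁻ⱼ)(y⁺ₘ − y⁻ⱼ)`; in particular it differs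
from the drift field `V(x) = (1/(Z_p Z_q))·(1/N²) ΣₘΣⱼ k(x,y⁺ₘ)k(x,y⁻ⱼ)(y⁺ₘ − y⁻ⱼ)`
by carrying the factor `1/(Z_p + Z_q)²` instead of `1/(Z_p Z_q)`, i.e.
`V̄ = (Z_p Z_q/(Z_p + Z_q)²) • V`. -/
theorem implemented_drift_field_normalization {n N : ℕ} (hN : 0 < N)
    (k : EuclideanSpace ℝ (Fin n) → EuclideanSpace ℝ (Fin n) → ℝ)
    (hk : ∀ u v : EuclideanSpace ℝ (Fin n), 0 < k u v)
    (x : EuclideanSpace ℝ (Fin n))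
    (yp yn : Fin N → EuclideanSpace ℝ (Fin n))
    (S : ℝ) (hS : S = ∑ m, k x (yp m) + ∑ m, k x (yn m))
    (Ap An : Fin N → ℝ)
    (hAp : ∀ j, Ap j = k x (yp j) / S) (hAn : ∀ j, An j = k x (yn j) / S)
    (Wp Wn : Fin N → ℝ)
    (hWp : ∀ j, Wp j = Ap j * ∑ m, An m) (hWn : ∀ j, Wn j = An j * ∑ m, Ap m)
    (Vbar : EuclideanSpace ℝ (Fin n))
    (hVbar : Vbar = ∑ j, Wp j • yp j - ∑ j, Wn j • yn j)
    (Zp Zq : ℝ)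
    (hZp : Zp = (1 / (N : ℝ)) * ∑ j, k x (yp j))
    (hZq : Zq = (1 / (N : ℝ)) * ∑ j, k x (yn j))
    (V : EuclideanSpace ℝ (Fin n))
    (hV : V = ((Zp * Zq)⁻¹ * ((N : ℝ) ^ 2)⁻¹) •
      ∑ m, ∑ j, (k x (yp m) * k x (yn j)) • (yp m - yn j)) :
    Vbar = (((Zp + Zq) ^ 2)⁻¹ * ((N : ℝ) ^ 2)⁻¹) •
        ∑ m, ∑ j, (k x (yp m) * k x (yn j)) • (yp m - yn j) ∧
    Vbar = (Zp * Zq / (Zp + Zq) ^ 2) • V := by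
  have hVbar_S : Vbar = (S ^ 2)⁻¹ • ∑ m, ∑ j, (k x (yp m) * k x (yn j)) • (yp m - yn j) := by
    simp only [hVbar, hWp, hWn, hAp, hAn]
    exact sum_cross_normalized_smul_sub _ _ yp yn S
  have hN0 : (N : ℝ) ≠ 0 := by positivity
  have hS_N : S = N * (Zp + Zq) := by
    rw [hS, hZp, hZq]
    field_simp
  have hVbar_Z : Vbar = (((Zp + Zq) ^ 2)⁻¹ * ((N : ℝ) ^ 2)⁻¹) •
      ∑ m, ∑ j, (k x (yp m) * k x (yn j)) • (yp m - yn j) := by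
    rw [hVbar_S, hS_N, mul_pow, mul_inv, mul_comm]
  have : Nonempty (Fin N) := ⟨⟨0, hN⟩⟩
  have hZp0 : Zp ≠ 0 := by
    rw [hZp]
    exact mul_ne_zero (by positivity) (sum_pos (fun j _ => hk x (yp j)) univ_nonempty).ne'
  have hZq0 : Zq ≠ 0 := by
    rw [hZq]
    exact mul_ne_zero (by positivity) (sum_pos (fun j _ => hk x (yn j)) univ_nonempty).ne'
  refine ⟨hVbar_Z, ?_⟩
  rw [hVbar_Z, hV, smul_smul]
  congr 1
  field_simp
end
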